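/- The generalized intersection of constrained zonotopes is a constrained zonotope: given Z = {c_z + G_z ξ : ‖ξ‖∞ ≤ 1, A_z ξ = b_z} ⊂ ℝⁿ, Y = {c_y + G_y η : ‖η‖∞ ≤ 1, A_y η = b_y} ⊂ ℝ^m, and R ∈ ℝ^{m×n}, the set Z ∩_R Y := {z ∈ Z : Rz ∈ Y} equals the constrained zonotope with center c_z, generators [G_z 0], constraint matrix with rows (A_z 0), (0 A_y), (R G_z −G_y), and right-hand side (b_z; b_y; c_y − R c_z). -/

import Mathlib

/-! A point of the generalized intersection comes with a generator vector `ξ` of `Z` and `η` of `Y`,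
and `(ξ; η)` serves as generator vector of the combined set: its last block row of constraints,
`R G_z ξ - G_y η = c_y - R c_z`, is `R (c_z + G_z ξ) = c_y + G_y η` rearranged, i.e. the
condition that `η` witnesses `R z ∈ Y`. -/

open Matrix

section ConstrainedZonotope

variable {n o ι κ μ ν : Type*}

def constrainedZonotope [Fintype ι] (G : Matrix n ι ℝ) (c : n → ℝ) (A : Matrix μ ι ℝ)
    (b : μ → ℝ) : Set (n → ℝ) :=
  {x | ∃ ξ : ι → ℝ, (∀ i, |ξ i| ≤ 1) ∧ A *ᵥ ξ = b ∧ x = c + G *ᵥ ξ}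

def generalizedInter [Fintype n] (Z : Set (n → ℝ)) (R : Matrix o n ℝ) (Y : Set (o → ℝ)) :
    Set (n → ℝ) :=
  {z | z ∈ Z ∧ R *ᵥ z ∈ Y}

theorem Sum.exists_arrow_iff {α β γ : Type*} {p : (α ⊕ β → γ) → Prop} :
    (∃ ζ, p ζ) ↔ ∃ ξ η, p (Sum.elim ξ η) :=
  ⟨fun ⟨ζ, h⟩ => ⟨ζ ∘ Sum.inl, ζ ∘ Sum.inr, by rwa [Sum.elim_comp_inl_inr]⟩,
    fun ⟨_, _, h⟩ => ⟨_, h⟩⟩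

variable [Fintype n] [Fintype ι] [Fintype κ]

theorem fromRows_fromBlocks_fromCols_mulVec_sumElim_eq_iff (Gz : Matrix n ι ℝ) (cz : n → ℝ)
    (Az : Matrix μ ι ℝ) (bz : μ → ℝ) (Gy : Matrix o κ ℝ) (cy : o → ℝ) (Ay : Matrix ν κ ℝ)
    (by' : ν → ℝ) (R : Matrix o n ℝ) (ξ : ι → ℝ) (η : κ → ℝ) :
    fromRows (fromBlocks Az 0 0 Ay) (fromCols (R * Gz) (-Gy)) *ᵥ Sum.elim ξ η
        = Sum.elim (Sum.elim bz by') (cy - R *ᵥ cz) ↔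
      Az *ᵥ ξ = bz ∧ Ay *ᵥ η = by' ∧ R *ᵥ (cz + Gz *ᵥ ξ) = cy + Gy *ᵥ η := by
  have coupling :
      (R * Gz) *ᵥ ξ + -Gy *ᵥ η = cy - R *ᵥ cz ↔ R *ᵥ (cz + Gz *ᵥ ξ) = cy + Gy *ᵥ η := by
    rw [mulVec_add, ← mulVec_mulVec, neg_mulVec]
    constructor <;> intro h <;> linear_combination h
  simp only [fromRows_mulVec, fromBlocks_mulVec, fromCols_mulVec_sumElim, Sum.elim_comp_inl,
    Sum.elim_comp_inr, zero_mulVec, add_zero, zero_add, Sum.elim_eq_iff, coupling, and_assoc]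

theorem generalizedInter_constrainedZonotope (Gz : Matrix n ι ℝ) (cz : n → ℝ)
    (Az : Matrix μ ι ℝ) (bz : μ → ℝ) (Gy : Matrix o κ ℝ) (cy : o → ℝ) (Ay : Matrix ν κ ℝ)
    (by' : ν → ℝ) (R : Matrix o n ℝ) :
    generalizedInter (constrainedZonotope Gz cz Az bz) R (constrainedZonotope Gy cy Ay by') =
      constrainedZonotope (fromCols Gz 0) cz
        (fromRows (fromBlocks Az 0 0 Ay) (fromCols (R * Gz) (-Gy)))
        (Sum.elim (Sum.elim bz by') (cy - R *ᵥ cz)) := by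
  ext x
  simp only [generalizedInter, constrainedZonotope, Set.mem_ofPred_eq, Sum.exists_arrow_iff,
    Sum.forall, Sum.elim_inl, Sum.elim_inr, fromRows_fromBlocks_fromCols_mulVec_sumElim_eq_iff,
    fromCols_mulVec_sumElim, zero_mulVec, add_zero]
  constructor
  · rintro ⟨⟨ξ, hξ, hAz, rfl⟩, η, hη, hAy, hR⟩
    exact ⟨ξ, η, ⟨hξ, hη⟩, ⟨hAz, hAy, hR⟩, rfl⟩
  · rintro ⟨ξ, η, ⟨hξ, hη⟩, ⟨hAz, hAy, hR⟩, rfl⟩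
    exact ⟨⟨ξ, hξ, hAz, rfl⟩, η, hη, hAy, hR⟩

end ConstrainedZonotope

/-- The generalized intersection `Z ∩_R Y = {z ∈ Z : Rz ∈ Y}` of constrained
zonotopes equals the constrained zonotope with center `c_z`, generators
`[G_z 0]`, constraint matrix with row blocks `(A_z 0)`, `(0 A_y)`,
`(R G_z  −G_y)`, and right-hand side `(b_z; b_y; c_y − R c_z)`. -/
theorem constrained_zonotope_generalized_intersection
    (n m gz gy cz' cy' : ℕ)
    (Gz : Matrix (Fin n) (Fin gz) ℝ) (cz : Fin n → ℝ)
    (Az : Matrix (Fin cz') (Fin gz) ℝ) (bz : Fin cz' → ℝ)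
    (Gy : Matrix (Fin m) (Fin gy) ℝ) (cy : Fin m → ℝ)
    (Ay : Matrix (Fin cy') (Fin gy) ℝ) (by' : Fin cy' → ℝ)
    (R : Matrix (Fin m) (Fin n) ℝ) :
    {z : Fin n → ℝ |
        z ∈ {x : Fin n → ℝ | ∃ ξ : Fin gz → ℝ,
          (∀ i, |ξ i| ≤ 1) ∧ Az.mulVec ξ = bz ∧ x = cz + Gz.mulVec ξ} ∧
        R.mulVec z ∈ {y : Fin m → ℝ | ∃ η : Fin gy → ℝ,
          (∀ i, |η i| ≤ 1) ∧ Ay.mulVec η = by' ∧ y = cy + Gy.mulVec η}}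
    = {x : Fin n → ℝ | ∃ ζ : Fin gz ⊕ Fin gy → ℝ,
        (∀ i, |ζ i| ≤ 1) ∧
        (Matrix.fromRows (Matrix.fromBlocks Az 0 0 Ay)
            (Matrix.fromCols (R * Gz) (-Gy))).mulVec ζ
          = Sum.elim (Sum.elim bz by') (cy - R.mulVec cz) ∧
        x = cz + (Matrix.fromCols Gz (0 : Matrix (Fin n) (Fin gy) ℝ)).mulVec ζ} :=
  generalizedInter_constrainedZonotope Gz cz Az bz Gy cy Ay by' R
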